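/- Let Q be a finite faithful connected quandle, let α be a central congruence of Q, and let a ∈ Q. Then: (1) for all x, y ∈ Q, x α y if and only if L x * (L y)⁻¹ ∈ Dis_α; and (2) the setwise stabilizer S = {h ∈ Dis(Q) : h maps the α-class of a onto itself} decomposes as an internal direct product S = Dis_α ⊔ Dis(Q)_a with Dis_α ⊓ Dis(Q)_a = ⊥ (where Dis(Q)_a is the stabilizer of a in Dis(Q), which is normal in S and commutes elementwise with Dis_α). -/

import Mathlib

open Quandles

/-- Left multiplication by `a` as a permutation of the quandle. -/
def QL {Q : Type*} [Quandle Q] (a : Q) : Equiv.Perm Q := Rack.act' a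

/-- The displacement group of a quandle: the subgroup of `Equiv.Perm Q`
generated by `{L a * (L b)⁻¹ : a, b ∈ Q}`. -/
def Dis (Q : Type*) [Quandle Q] : Subgroup (Equiv.Perm Q) :=
  Subgroup.closure {g : Equiv.Perm Q | ∃ a b : Q, g = QL a * (QL b)⁻¹}

/-- A congruence of a quandle: an equivalence relation compatible with `◃` and `◃⁻¹`. -/
structure QuandleCongruence (Q : Type*) [Quandle Q] where
  rel : Q → Q → Prop
  iseqv : Equivalence rel
  act_compat : ∀ {a b c d : Q}, rel a b → rel c d → rel (a ◃ c) (b ◃ d)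
  invAct_compat : ∀ {a b c d : Q}, rel a b → rel c d → rel (a ◃⁻¹ c) (b ◃⁻¹ d)

/-- The displacement group relative to a congruence `α`: generated by
`{L x * (L y)⁻¹ : x α y}`. -/
def DisRel (Q : Type*) [Quandle Q] (α : QuandleCongruence Q) : Subgroup (Equiv.Perm Q) :=
  Subgroup.closure {g : Equiv.Perm Q | ∃ x y : Q, α.rel x y ∧ g = QL x * (QL y)⁻¹}

/-- A congruence `α` is central if `Dis_α` is central in `Dis Q` and points related
by `α` have the same stabilizer in `Dis Q`. -/
def IsCentralCongruence (Q : Type*) [Quandle Q] (α : QuandleCongruence Q) : Prop :=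
  (∀ g ∈ DisRel Q α, ∀ h ∈ Dis Q, g * h = h * g) ∧
    ∀ x y : Q, α.rel x y → ∀ h : Equiv.Perm Q, h ∈ Dis Q → (h x = x ↔ h y = y)

section Aux

variable {Q : Type*} [Quandle Q]

theorem Equiv.Perm.apply_inv_self {β : Type*} (f : Equiv.Perm β) (x : β) : f (f⁻¹ x) = x :=
  Equiv.apply_symm_apply f x

theorem Equiv.Perm.inv_apply_self {β : Type*} (f : Equiv.Perm β) (x : β) : f⁻¹ (f x) = x :=
  Equiv.symm_apply_apply f x

lemma QL_conj (c u : Q) : QL c * QL u * (QL c)⁻¹ = QL (c ◃ u) :=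
  (Rack.ad_conj c u).symm

lemma QL_invconj (c u : Q) : (QL c)⁻¹ * QL u * QL c = QL (c ◃⁻¹ u) := by
  have h := QL_conj c (c ◃⁻¹ u)
  rw [Rack.act_invAct_eq] at h
  rw [← h]
  group

lemma disRel_le_dis (α : QuandleCongruence Q) : DisRel Q α ≤ Dis Q :=
  Subgroup.closure_mono (by rintro g ⟨x, y, -, rfl⟩; exact ⟨x, y, rfl⟩)

lemma dis_preserves (α : QuandleCongruence Q) {h : Equiv.Perm Q} (hh : h ∈ Dis Q) :
    ∀ x y : Q, α.rel x y ↔ α.rel (h x) (h y) := by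
  refine Subgroup.closure_induction
    (p := fun g _ => ∀ x y : Q, α.rel x y ↔ α.rel (g x) (g y)) ?_ ?_ ?_ ?_ hh
  · rintro g ⟨u, v, rfl⟩ x y
    show α.rel x y ↔ α.rel (u ◃ (v ◃⁻¹ x)) (u ◃ (v ◃⁻¹ y))
    constructor
    · intro hxy
      exact α.act_compat (α.iseqv.refl u) (α.invAct_compat (α.iseqv.refl v) hxy)
    · intro hxy
      have h1 := α.invAct_compat (α.iseqv.refl u) hxy
      rw [Rack.invAct_act_eq, Rack.invAct_act_eq] at h1
      have h2 := α.act_compat (α.iseqv.refl v) h1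
      rwa [Rack.act_invAct_eq, Rack.act_invAct_eq] at h2
  · exact fun x y => Iff.rfl
  · intro g h _ _ ihg ihh x y
    exact (ihh x y).trans (ihg (h x) (h y))
  · intro g _ ih x y
    have h1 := ih (g⁻¹ x) (g⁻¹ y)
    rw [Equiv.Perm.apply_inv_self, Equiv.Perm.apply_inv_self] at h1
    exact h1.symm

lemma disRel_rel (α : QuandleCongruence Q) {g : Equiv.Perm Q} (hg : g ∈ DisRel Q α) :
    ∀ z : Q, α.rel (g z) z := by
  refine Subgroup.closure_induction (p := fun g _ => ∀ z : Q, α.rel (g z) z) ?_ ?_ ?_ ?_ hg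
  · rintro g ⟨u, v, huv, rfl⟩ z
    show α.rel (u ◃ (v ◃⁻¹ z)) z
    have h1 := α.act_compat huv (α.iseqv.refl (v ◃⁻¹ z))
    rwa [Rack.act_invAct_eq] at h1
  · exact fun z => α.iseqv.refl z
  · intro g h _ _ ihg ihh z
    exact α.iseqv.trans (ihg (h z)) (ihh z)
  · intro g _ ih z
    have h1 := ih (g⁻¹ z)
    rw [Equiv.Perm.apply_inv_self] at h1
    exact α.iseqv.symm h1

lemma disRel_eq_one (hconn : ∀ x y : Q, ∃ g ∈ Dis Q, g x = y)
    {α : QuandleCongruence Q} (hcent : IsCentralCongruence Q α)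
    {g : Equiv.Perm Q} (hg : g ∈ DisRel Q α) {b : Q} (hb : g b = b) : g = 1 := by
  ext z
  obtain ⟨f, hf, rfl⟩ := hconn b z
  have hcomm : g * f = f * g := hcent.1 g hg f hf
  have h1 : (g * f) b = (f * g) b := by rw [hcomm]
  simpa [Equiv.Perm.mul_apply, hb] using h1

lemma quandle_key [Finite Q]
    (hfaith : Function.Injective (fun a : Q => QL a))
    (hconn : ∀ x y : Q, ∃ g ∈ Dis Q, g x = y)
    (α : QuandleCongruence Q) (hcent : IsCentralCongruence Q α) (y : Q) :
    {z : Q | α.rel z y} = {z : Q | QL z * (QL y)⁻¹ ∈ DisRel Q α} ∧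
      ∀ z : Q, α.rel z y → ∃ g ∈ DisRel Q α, g y = z := by
  classical
  set S1 : Set Q := {z : Q | α.rel z y} with hS1
  set S2 : Set Q := {z : Q | QL z * (QL y)⁻¹ ∈ DisRel Q α} with hS2
  have hsub : S1 ⊆ S2 := fun z hz => Subgroup.subset_closure ⟨z, y, hz, rfl⟩
  -- injection S2 → DisRel
  let ψ : S2 → (DisRel Q α) := fun z => ⟨QL z.1 * (QL y)⁻¹, z.2⟩
  have hψ : Function.Injective ψ := by
    intro z w h
    have h1 : QL z.1 * (QL y)⁻¹ = QL w.1 * (QL y)⁻¹ := congrArg Subtype.val h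
    have h2 : QL z.1 = QL w.1 := mul_right_cancel h1
    exact Subtype.ext (hfaith h2)
  -- injection DisRel → S1
  let χ : (DisRel Q α) → S1 := fun g => ⟨g.1 y, disRel_rel α g.2 y⟩
  have hχ : Function.Injective χ := by
    intro g g' h
    have h1 : g.1 y = g'.1 y := congrArg Subtype.val h
    have h2 : ((g'.1)⁻¹ * g.1) y = y := by
      rw [Equiv.Perm.mul_apply, h1, Equiv.Perm.inv_apply_self]
    have h3 : (g'.1)⁻¹ * g.1 = 1 :=
      disRel_eq_one hconn hcent (mul_mem (inv_mem g'.2) g.2) h2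
    exact Subtype.ext (inv_mul_eq_one.mp h3).symm
  have c1 : Nat.card S2 ≤ Nat.card (DisRel Q α) := Nat.card_le_card_of_injective ψ hψ
  have c2 : Nat.card (DisRel Q α) ≤ Nat.card S1 := Nat.card_le_card_of_injective χ hχ
  have c3 : Nat.card S1 ≤ Nat.card S2 :=
    Nat.card_le_card_of_injective (Set.inclusion hsub) (Set.inclusion_injective hsub)
  have hseteq : S1 = S2 := by
    refine Set.eq_of_subset_of_ncard_le hsub ?_ (Set.toFinite S2)
    rw [← Nat.card_coe_set_eq, ← Nat.card_coe_set_eq]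
    exact c1.trans c2
  refine ⟨hseteq, ?_⟩
  intro z hz
  have hbij : Function.Bijective χ :=
    (Nat.bijective_iff_injective_and_card χ).mpr ⟨hχ, le_antisymm c2 (c3.trans c1)⟩
  obtain ⟨g, hg⟩ := hbij.2 ⟨z, hz⟩
  exact ⟨g.1, g.2, congrArg Subtype.val hg⟩

end Aux

theorem stmt7 (Q : Type*) [Quandle Q] [Finite Q]
    (hfaith : Function.Injective (fun a : Q => QL a))
    (hconn : ∀ x y : Q, ∃ g ∈ Dis Q, g x = y)
    (α : QuandleCongruence Q) (hcent : IsCentralCongruence Q α) (a : Q) :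
    (∀ x y : Q, α.rel x y ↔ QL x * (QL y)⁻¹ ∈ DisRel Q α) ∧
      (∀ h : Equiv.Perm Q,
        (h ∈ Dis Q ∧ ⇑h '' {x : Q | α.rel x a} = {x : Q | α.rel x a}) ↔
          h ∈ DisRel Q α ⊔ (Dis Q ⊓ MulAction.stabilizer (Equiv.Perm Q) a)) ∧
      DisRel Q α ⊓ (Dis Q ⊓ MulAction.stabilizer (Equiv.Perm Q) a) = ⊥ ∧
      (∀ h : Equiv.Perm Q, h ∈ Dis Q →
        ⇑h '' {x : Q | α.rel x a} = {x : Q | α.rel x a} →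
          ∀ k ∈ Dis Q ⊓ MulAction.stabilizer (Equiv.Perm Q) a,
            h * k * h⁻¹ ∈ Dis Q ⊓ MulAction.stabilizer (Equiv.Perm Q) a) ∧
      (∀ g ∈ DisRel Q α, ∀ k ∈ Dis Q ⊓ MulAction.stabilizer (Equiv.Perm Q) a,
        g * k = k * g) := by
  have part1 : ∀ x y : Q, α.rel x y ↔ QL x * (QL y)⁻¹ ∈ DisRel Q α := by
    intro x y
    constructor
    · exact fun hxy => Subgroup.subset_closure ⟨x, y, hxy, rfl⟩
    · intro hg
      have hx : x ∈ {z : Q | QL z * (QL y)⁻¹ ∈ DisRel Q α} := hg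
      rw [← (quandle_key hfaith hconn α hcent y).1] at hx
      exact hx
  -- images of the class of `a` under elements of `DisRel`
  have himg1 : ∀ g ∈ DisRel Q α, ⇑g '' {x : Q | α.rel x a} = {x : Q | α.rel x a} := by
    intro g hg
    ext z
    constructor
    · rintro ⟨w, hw, rfl⟩
      exact α.iseqv.trans (disRel_rel α hg w) hw
    · intro hz
      exact ⟨g⁻¹ z, α.iseqv.trans (disRel_rel α (inv_mem hg) z) hz,
        Equiv.Perm.apply_inv_self g z⟩
  -- images of the class of `a` under elements of `Dis` fixing `a`
  have himg2 : ∀ h ∈ Dis Q, h a = a → ⇑h '' {x : Q | α.rel x a} = {x : Q | α.rel x a} := by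
    intro h hh ha
    have hinva : h⁻¹ a = a := by
      conv_lhs => rw [← ha]
      exact Equiv.Perm.inv_apply_self h a
    ext z
    constructor
    · rintro ⟨w, hw, rfl⟩
      have h1 := (dis_preserves α hh w a).mp hw
      rwa [ha] at h1
    · intro hz
      refine ⟨h⁻¹ z, ?_, Equiv.Perm.apply_inv_self h z⟩
      have h1 := (dis_preserves α (inv_mem hh) z a).mp hz
      rwa [hinva] at h1
  -- the setwise stabilizer of the class of `a`, as a subgroup
  let T : Subgroup (Equiv.Perm Q) :=
    { carrier := {h : Equiv.Perm Q | h ∈ Dis Q ∧ ⇑h '' {x : Q | α.rel x a} = {x : Q | α.rel x a}}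
      one_mem' := ⟨one_mem _, by simp⟩
      mul_mem' := by
        intro g h hg hh
        refine ⟨mul_mem hg.1 hh.1, ?_⟩
        rw [Equiv.Perm.coe_mul, Set.image_comp, hh.2, hg.2]
      inv_mem' := by
        intro g hg
        refine ⟨inv_mem hg.1, ?_⟩
        conv_lhs => rw [← hg.2]
        rw [Set.image_image]
        simp }
  have part2 : ∀ h : Equiv.Perm Q,
      (h ∈ Dis Q ∧ ⇑h '' {x : Q | α.rel x a} = {x : Q | α.rel x a}) ↔
        h ∈ DisRel Q α ⊔ (Dis Q ⊓ MulAction.stabilizer (Equiv.Perm Q) a) := by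
    intro h
    constructor
    · rintro ⟨hh, himg⟩
      have haα : α.rel (h a) a := by
        have h1 : h a ∈ {x : Q | α.rel x a} := himg ▸ ⟨a, α.iseqv.refl a, rfl⟩
        exact h1
      obtain ⟨g, hg, hga⟩ := (quandle_key hfaith hconn α hcent a).2 (h a) haα
      have hk : g⁻¹ * h ∈ Dis Q ⊓ MulAction.stabilizer (Equiv.Perm Q) a := by
        rw [Subgroup.mem_inf]
        refine ⟨mul_mem (inv_mem (disRel_le_dis α hg)) hh, ?_⟩
        rw [MulAction.mem_stabilizer_iff]
        show (g⁻¹ * h) a = a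
        rw [Equiv.Perm.mul_apply, ← hga, Equiv.Perm.inv_apply_self]
      have hdecomp : h = g * (g⁻¹ * h) := by group
      rw [hdecomp]
      exact mul_mem (Subgroup.mem_sup_left hg) (Subgroup.mem_sup_right hk)
    · intro hh
      have hle : DisRel Q α ⊔ (Dis Q ⊓ MulAction.stabilizer (Equiv.Perm Q) a) ≤ T := by
        refine sup_le ?_ ?_
        · intro g hg
          exact ⟨disRel_le_dis α hg, himg1 g hg⟩
        · intro k hk
          rw [Subgroup.mem_inf] at hk
          have hka : k a = a := MulAction.mem_stabilizer_iff.mp hk.2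
          exact ⟨hk.1, himg2 k hk.1 hka⟩
      exact hle hh
  have part3 : DisRel Q α ⊓ (Dis Q ⊓ MulAction.stabilizer (Equiv.Perm Q) a) = ⊥ := by
    rw [eq_bot_iff]
    intro g hg
    rw [Subgroup.mem_inf, Subgroup.mem_inf] at hg
    have hga : g a = a := MulAction.mem_stabilizer_iff.mp hg.2.2
    have h1 : g = 1 := disRel_eq_one hconn hcent hg.1 hga
    rw [Subgroup.mem_bot]
    exact h1
  have part4 : ∀ h : Equiv.Perm Q, h ∈ Dis Q →
      ⇑h '' {x : Q | α.rel x a} = {x : Q | α.rel x a} →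
        ∀ k ∈ Dis Q ⊓ MulAction.stabilizer (Equiv.Perm Q) a,
          h * k * h⁻¹ ∈ Dis Q ⊓ MulAction.stabilizer (Equiv.Perm Q) a := by
    intro h hh himg k hk
    rw [Subgroup.mem_inf] at hk ⊢
    obtain ⟨hk1, hk2⟩ := hk
    refine ⟨mul_mem (mul_mem hh hk1) (inv_mem hh), ?_⟩
    rw [MulAction.mem_stabilizer_iff]
    have hinva : α.rel (h⁻¹ a) a := by
      have ha : a ∈ ⇑h '' {x : Q | α.rel x a} := by
        rw [himg]; exact α.iseqv.refl a
      obtain ⟨w, hw, hwe⟩ := ha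
      have h1 : h⁻¹ a = w := by rw [← hwe, Equiv.Perm.inv_apply_self]
      rwa [h1]
    have hka : k a = a := MulAction.mem_stabilizer_iff.mp hk2
    have hfix : k (h⁻¹ a) = h⁻¹ a := (hcent.2 (h⁻¹ a) a hinva k hk1).mpr hka
    show (h * k * h⁻¹) a = a
    rw [Equiv.Perm.mul_apply, Equiv.Perm.mul_apply, hfix, Equiv.Perm.apply_inv_self]
  have part5 : ∀ g ∈ DisRel Q α, ∀ k ∈ Dis Q ⊓ MulAction.stabilizer (Equiv.Perm Q) a,
      g * k = k * g := by
    intro g hg k hk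
    exact hcent.1 g hg k (Subgroup.mem_inf.mp hk).1
  exact ⟨part1, part2, part3, part4, part5⟩
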